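/- For an odd prime p and integers a, b with p ∤ ab, K(a,b)^2 ≤ p + p^{3/2}. -/

import Mathlib

open Finset

/-- `ep p α = exp(2πiα/p)`. -/
noncomputable def ep (p : ℕ) (α : ℤ) : ℂ := Complex.exp (2 * Real.pi * Complex.I * α / p)

/-- The Kloosterman sum `K(a,b) = ∑_{x=1}^{p-1} e_p(a x + b x̄)`. -/
noncomputable def Kl (p : ℕ) (a b : ℤ) : ℂ :=
  ∑ x ∈ Finset.Icc 1 (p - 1), ep p (a * x + b * (((x : ZMod p)⁻¹).val : ℤ))

/-!
Work over any finite field `𝔽_q` of odd characteristic. Orthogonality of additive characters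
turns the moments of `K(a, b)` over all `(a, b) ∈ 𝔽_q²` into point counts: `∑ |K|² = q² (q - 1)`,
and `∑ |K|⁴ = q² · #{x + y = u + v, 1/x + 1/y = 1/u + 1/v}`, where for fixed `(x, y)` the
solutions `(u, v)` are `{(x, y), (y, x)}` by Vieta, unless `x + y = 0`; this gives
`3 q² (q - 1) (q - 2)`. For `a ≠ 0`, `K(a, b) = K(1, ab)`, so every row `a ≠ 0` of the table
`(a, b) ↦ K(a, b)` is a permutation of the row `a = 1`, and the two moments yield
`∑_{c ≠ 0} (|K(1, c)|² - q)² = q³ - 2q² - q - 1 < q³`. One term of this sum gives the bound.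
-/

section units

variable {G₀ M : Type*} [GroupWithZero G₀] [Fintype G₀] [DecidableEq G₀] [AddCommMonoid M]

theorem Finset.sum_units_eq_sum_erase_zero (f : G₀ → M) :
    ∑ u : G₀ˣ, f u = ∑ x ∈ univ.erase 0, f x :=
  sum_bij (fun u _ => (u : G₀)) (fun u _ => mem_erase.2 ⟨u.ne_zero, mem_univ _⟩)
    (fun _ _ _ _ => Units.ext)
    (fun x hx => ⟨Units.mk0 x (ne_of_mem_erase hx), mem_univ _, rfl⟩) (fun _ _ => rfl)

theorem Fintype.sum_eq_add_sum_units (f : G₀ → M) : ∑ x, f x = f 0 + ∑ u : G₀ˣ, f u := by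
  rw [sum_units_eq_sum_erase_zero, add_sum_erase _ _ (mem_univ 0)]

end units

theorem add_eq_add_and_inv_add_inv_eq_iff {F : Type*} [Field F] {x y u v : F} (hx : x ≠ 0)
    (hy : y ≠ 0) (hu : u ≠ 0) (hv : v ≠ 0) (hxy : x + y ≠ 0) :
    u + v = x + y ∧ u⁻¹ + v⁻¹ = x⁻¹ + y⁻¹ ↔ u = x ∧ v = y ∨ u = y ∧ v = x := by
  constructor
  · rintro ⟨hsum, hinv⟩
    have hprod : u * v = x * y := by
      field_simp at hinv
      apply mul_left_cancel₀ hxy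
      linear_combination -hinv + x * y * hsum
    have hroot : (u - x) * (u - y) = 0 := by linear_combination u * hsum - hprod
    rcases mul_eq_zero.1 hroot with h | h
    · exact Or.inl ⟨by linear_combination h, by linear_combination hsum - h⟩
    · exact Or.inr ⟨by linear_combination h, by linear_combination hsum - h⟩
  · rintro (⟨rfl, rfl⟩ | ⟨rfl, rfl⟩) <;> constructor <;> ring

section Kloosterman

variable {F : Type*} [Field F] [Fintype F] [DecidableEq F] (ψ : AddChar F ℂ)

noncomputable def kloostermanSum (a b : F) : ℂ := ∑ x : Fˣ, ψ (a * x + b * (x : F)⁻¹)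

theorem kloostermanSum_comm (a b : F) : kloostermanSum ψ a b = kloostermanSum ψ b a :=
  Fintype.sum_equiv (Equiv.inv Fˣ) _ _ fun x => by simp [add_comm]

theorem kloostermanSum_units_mul (u : Fˣ) (a b : F) :
    kloostermanSum ψ (u * a) b = kloostermanSum ψ a (u * b) :=
  Fintype.sum_equiv (Equiv.mulLeft u) _ _ fun x => by
    simp only [Equiv.coe_mulLeft, Units.val_mul, mul_inv]
    field_simp

theorem kloostermanSum_eq_kloostermanSum_one {a : F} (ha : a ≠ 0) (b : F) :
    kloostermanSum ψ a b = kloostermanSum ψ 1 (a * b) := by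
  simpa using kloostermanSum_units_mul ψ (Units.mk0 a ha) 1 b

theorem kloostermanSum_zero_zero : kloostermanSum ψ 0 0 = Fintype.card Fˣ := by
  simp [kloostermanSum]

variable {ψ}

theorem kloostermanSum_zero_right (hψ : ψ.IsPrimitive) {a : F} (ha : a ≠ 0) :
    kloostermanSum ψ a 0 = -1 := by
  have h := AddChar.sum_mulShift a hψ
  rw [if_neg ha, Fintype.sum_eq_add_sum_units, zero_mul, AddChar.map_zero_eq_one,
    Nat.cast_zero] at h
  simp only [kloostermanSum, zero_mul, add_zero, mul_comm a]
  linear_combination h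

theorem kloostermanSum_zero_left (hψ : ψ.IsPrimitive) {b : F} (hb : b ≠ 0) :
    kloostermanSum ψ 0 b = -1 := by
  rw [kloostermanSum_comm, kloostermanSum_zero_right hψ hb]

theorem sum_sum_addChar_mul_add_mul (hψ : ψ.IsPrimitive) (s t : F) :
    ∑ a : F, ∑ b : F, ψ (a * s + b * t) =
      if s = 0 ∧ t = 0 then (Fintype.card F : ℂ) ^ 2 else 0 := by
  simp only [AddChar.map_add_eq_mul, ← mul_sum, ← sum_mul, AddChar.sum_mulShift _ hψ]
  split_ifs <;> simp_all [sq]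

theorem sum_sum_norm_sq_sum_addChar (hψ : ψ.IsPrimitive) {ι : Type*} [Fintype ι] [DecidableEq ι]
    (f g : ι → F) :
    ∑ a : F, ∑ b : F, ‖∑ i, ψ (a * f i + b * g i)‖ ^ 2 =
      (Fintype.card F : ℝ) ^ 2 * ∑ i, (#{j | f j = f i ∧ g j = g i} : ℝ) := by
  apply Complex.ofReal_injective
  push_cast
  simp_rw [← Complex.mul_conj', map_sum, sum_mul_sum, ← AddChar.map_neg_eq_conj,
    ← AddChar.map_add_eq_mul]
  have expand : ∀ a b i j, a * f i + b * g i + -(a * f j + b * g j) =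
      a * (f i - f j) + b * (g i - g j) := fun _ _ _ _ => by ring
  simp_rw [expand, sum_comm (s := (univ : Finset F)) (t := (univ : Finset ι)),
    sum_sum_addChar_mul_add_mul hψ, sub_eq_zero, card_filter, mul_sum]
  push_cast
  simp only [mul_sum, mul_ite, mul_one, mul_zero]
  exact sum_congr rfl fun i _ => sum_congr rfl fun j _ => by simp only [eq_comm]

theorem sum_sum_norm_sq_kloostermanSum (hψ : ψ.IsPrimitive) :
    ∑ a : F, ∑ b : F, ‖kloostermanSum ψ a b‖ ^ 2 =
      (Fintype.card F : ℝ) ^ 2 * Fintype.card Fˣ := by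
  simp_rw [kloostermanSum]
  rw [sum_sum_norm_sq_sum_addChar hψ]
  simp [Units.val_inj, filter_eq']

variable (ψ) in
theorem kloostermanSum_sq (a b : F) :
    kloostermanSum ψ a b ^ 2 =
      ∑ x : Fˣ × Fˣ, ψ (a * (x.1 + x.2) + b * ((x.1 : F)⁻¹ + (x.2 : F)⁻¹)) := by
  rw [sq, kloostermanSum, sum_mul_sum, ← Finset.univ_product_univ, sum_product]
  refine sum_congr rfl fun x _ => sum_congr rfl fun y _ => ?_
  rw [← AddChar.map_add_eq_mul]
  ring_nf

theorem filter_add_eq_add_and_inv_add_inv_eq {x y : Fˣ} (hxy : (x : F) + y ≠ 0) :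
    ({z : Fˣ × Fˣ | (z.1 : F) + z.2 = x + y ∧ (z.1 : F)⁻¹ + (z.2 : F)⁻¹ = (x : F)⁻¹ + (y : F)⁻¹} :
      Finset (Fˣ × Fˣ)) = {(x, y), (y, x)} := by
  ext ⟨u, v⟩
  simp only [mem_filter, mem_univ, true_and, mem_insert, mem_singleton, Prod.mk.injEq,
    add_eq_add_and_inv_add_inv_eq_iff x.ne_zero y.ne_zero u.ne_zero v.ne_zero hxy, Units.val_inj]

theorem card_filter_add_eq_add_and_inv_add_inv_eq (x y : Fˣ) :
    #{z : Fˣ × Fˣ | (z.1 : F) + z.2 = x + y ∧ (z.1 : F)⁻¹ + (z.2 : F)⁻¹ = (x : F)⁻¹ + (y : F)⁻¹} =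
      if (x : F) + y = 0 then Fintype.card Fˣ else if x = y then 1 else 2 := by
  split_ifs with hxy hxy'
  · have hy : y = -x := Units.ext (by simpa [eq_neg_iff_add_eq_zero, add_comm] using hxy)
    subst hy
    rw [← card_univ]
    refine card_nbij' Prod.fst (fun u => (u, -u)) (fun _ _ => mem_univ _) (fun u _ => ?_)
      (fun z hz => ?_) (fun _ _ => rfl)
    · simp
    · have hz' := (mem_filter.1 hz).2.1
      rw [Units.val_neg, add_neg_cancel] at hz'
      exact Prod.ext rfl (Units.ext (eq_neg_of_add_eq_zero_right hz').symm)
  · rw [filter_add_eq_add_and_inv_add_inv_eq hxy, hxy', pair_eq_singleton, card_singleton]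
  · rw [filter_add_eq_add_and_inv_add_inv_eq hxy, card_pair (by simpa [eq_comm] using hxy')]

theorem sum_card_filter_add_eq_add_and_inv_add_inv_eq (hF : ringChar F ≠ 2) :
    ∑ x : Fˣ × Fˣ, (#{z : Fˣ × Fˣ | (z.1 : F) + z.2 = x.1 + x.2 ∧
      (z.1 : F)⁻¹ + (z.2 : F)⁻¹ = (x.1 : F)⁻¹ + (x.2 : F)⁻¹} : ℝ) =
      Fintype.card Fˣ * (3 * Fintype.card Fˣ - 3) := by
  have hrow (x : Fˣ) : ∑ y : Fˣ,
      ((if (x : F) + y = 0 then Fintype.card Fˣ else if x = y then 1 else 2 : ℕ) : ℝ) =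
        3 * Fintype.card Fˣ - 3 := by
    have hx : -x ≠ x := fun h => x.ne_zero
      ((Ring.eq_self_iff_eq_zero_of_char_ne_two hF).1 (by simpa using congrArg Units.val h))
    have hterm (y : Fˣ) :
        ((if (x : F) + y = 0 then Fintype.card Fˣ else if x = y then 1 else 2 : ℕ) : ℝ) =
          2 + (if y = -x then (Fintype.card Fˣ : ℝ) - 2 else 0) - if y = x then 1 else 0 := by
      simp only [add_eq_zero_iff_eq_neg', ← Units.val_neg, Units.val_inj]
      rcases eq_or_ne y (-x) with rfl | hy
      · simp [hx]
      · simp only [hy, if_false, eq_comm (a := x)]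
        split_ifs <;> norm_num
    simp only [hterm, sum_sub_distrib, sum_add_distrib, sum_ite_eq', mem_univ, if_true,
      sum_const, card_univ, nsmul_eq_mul]
    ring
  simp only [Fintype.sum_prod_type, card_filter_add_eq_add_and_inv_add_inv_eq, hrow, sum_const,
    card_univ, nsmul_eq_mul]

theorem sum_sum_norm_pow_four_kloostermanSum (hψ : ψ.IsPrimitive) (hF : ringChar F ≠ 2) :
    ∑ a : F, ∑ b : F, ‖kloostermanSum ψ a b‖ ^ 4 =
      (Fintype.card F : ℝ) ^ 2 * (Fintype.card Fˣ * (3 * Fintype.card Fˣ - 3)) := by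
  simp_rw [show ∀ z : ℂ, ‖z‖ ^ 4 = ‖z ^ 2‖ ^ 2 by intro z; rw [norm_pow, ← pow_mul],
    kloostermanSum_sq]
  rw [sum_sum_norm_sq_sum_addChar hψ, sum_card_filter_add_eq_add_and_inv_add_inv_eq hF]

theorem sum_sum_comp_kloostermanSum (hψ : ψ.IsPrimitive) (φ : ℂ → ℝ) :
    ∑ a : F, ∑ b : F, φ (kloostermanSum ψ a b) =
      φ (Fintype.card Fˣ) + 2 * Fintype.card Fˣ * φ (-1) +
        Fintype.card Fˣ * ∑ c : Fˣ, φ (kloostermanSum ψ 1 c) := by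
  have hrow (u : Fˣ) : ∑ v : Fˣ, φ (kloostermanSum ψ u v) = ∑ c : Fˣ, φ (kloostermanSum ψ 1 c) :=
    Fintype.sum_equiv (Equiv.mulLeft u) _ _ fun v => by
      rw [kloostermanSum_eq_kloostermanSum_one ψ u.ne_zero, Equiv.coe_mulLeft, Units.val_mul]
  have hleft (u : Fˣ) := kloostermanSum_zero_left hψ u.ne_zero
  have hright (u : Fˣ) := kloostermanSum_zero_right hψ u.ne_zero
  simp only [Fintype.sum_eq_add_sum_units (G₀ := F), kloostermanSum_zero_zero, hleft, hright,
    hrow, sum_add_distrib, sum_const, card_univ, nsmul_eq_mul]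
  ring

theorem sum_sq_norm_sq_kloostermanSum_one_sub_card (hψ : ψ.IsPrimitive) (hF : ringChar F ≠ 2) :
    ∑ c : Fˣ, (‖kloostermanSum ψ 1 c‖ ^ 2 - Fintype.card F) ^ 2 =
      (Fintype.card F : ℝ) ^ 3 - 2 * Fintype.card F ^ 2 - Fintype.card F - 1 := by
  have hq : (Fintype.card F : ℝ) = Fintype.card Fˣ + 1 := by
    simp [Fintype.card_eq_card_units_add_one (α := F)]
  have hn : (Fintype.card Fˣ : ℝ) ≠ 0 := by simp [Fintype.card_ne_zero]
  have hexpand : ∑ a : F, ∑ b : F, (‖kloostermanSum ψ a b‖ ^ 2 - Fintype.card F) ^ 2 =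
      ∑ a : F, ∑ b : F, ‖kloostermanSum ψ a b‖ ^ 4 -
        2 * Fintype.card F * ∑ a : F, ∑ b : F, ‖kloostermanSum ψ a b‖ ^ 2 +
          (Fintype.card F : ℝ) ^ 4 := by
    have hterm (z : ℂ) : (‖z‖ ^ 2 - Fintype.card F) ^ 2 =
        ‖z‖ ^ 4 - 2 * Fintype.card F * ‖z‖ ^ 2 + (Fintype.card F : ℝ) ^ 2 := by ring
    simp only [hterm, sum_add_distrib, sum_sub_distrib, ← mul_sum, sum_const, card_univ,
      nsmul_eq_mul]
    ring
  have h := sum_sum_comp_kloostermanSum hψ fun z => (‖z‖ ^ 2 - Fintype.card F) ^ 2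
  rw [hexpand, sum_sum_norm_pow_four_kloostermanSum hψ hF, sum_sum_norm_sq_kloostermanSum hψ]
    at h
  simp only [Complex.norm_natCast, norm_neg, norm_one] at h
  refine mul_left_cancel₀ hn ?_
  rw [hq] at h ⊢
  linear_combination -h

theorem norm_sq_kloostermanSum_le (hψ : ψ.IsPrimitive) (hF : ringChar F ≠ 2) {a b : F}
    (ha : a ≠ 0) (hb : b ≠ 0) :
    ‖kloostermanSum ψ a b‖ ^ 2 ≤ Fintype.card F + (Fintype.card F : ℝ) ^ ((3 : ℝ) / 2) := by
  have hsq : (‖kloostermanSum ψ a b‖ ^ 2 - Fintype.card F) ^ 2 ≤ (Fintype.card F : ℝ) ^ 3 := by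
    rw [kloostermanSum_eq_kloostermanSum_one ψ ha, ← Units.val_mk0 (mul_ne_zero ha hb)]
    refine (single_le_sum (f := fun c : Fˣ => (‖kloostermanSum ψ 1 c‖ ^ 2 - Fintype.card F) ^ 2)
      (fun _ _ => sq_nonneg _) (mem_univ _)).trans ?_
    rw [sum_sq_norm_sq_kloostermanSum_one_sub_card hψ hF]
    have : (0 : ℝ) ≤ Fintype.card F := Nat.cast_nonneg _
    nlinarith
  have hsqrt : √((Fintype.card F : ℝ) ^ 3) = (Fintype.card F : ℝ) ^ ((3 : ℝ) / 2) := by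
    rw [Real.sqrt_eq_rpow, ← Real.rpow_natCast, ← Real.rpow_mul (Nat.cast_nonneg _)]
    norm_num
  linarith [(le_abs_self _).trans (Real.abs_le_sqrt hsq)]

end Kloosterman

theorem ZMod.sum_Icc_one_pred_eq_sum_erase_zero {M : Type*} [AddCommMonoid M] (p : ℕ) [NeZero p]
    (g : ZMod p → M) : ∑ n ∈ Icc 1 (p - 1), g n = ∑ x ∈ univ.erase 0, g x := by
  have hlt {n : ℕ} (hn : n ∈ Icc 1 (p - 1)) : n < p := by
    have := NeZero.pos p
    rw [mem_Icc] at hn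
    omega
  refine sum_nbij' Nat.cast ZMod.val (fun n hn => ?_) (fun x hx => ?_)
    (fun n hn => ZMod.val_natCast_of_lt (hlt hn)) (fun x _ => ZMod.natCast_zmod_val x)
    (fun _ _ => rfl)
  · rw [mem_erase, Ne, ZMod.natCast_eq_zero_iff]
    exact ⟨fun hdvd => by simp_all [Nat.eq_zero_of_dvd_of_lt hdvd (hlt hn)], mem_univ _⟩
  · have h0 := (ZMod.val_eq_zero x).not.2 (ne_of_mem_erase hx)
    have := x.val_lt
    rw [mem_Icc]
    omega

theorem Kl_eq_kloostermanSum (p : ℕ) [Fact p.Prime] (a b : ℤ) :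
    Kl p a b = kloostermanSum ZMod.stdAddChar (a : ZMod p) (b : ZMod p) := by
  have hterm (n : ℕ) : ep p (a * n + b * ((n : ZMod p)⁻¹.val : ℤ)) =
      ZMod.stdAddChar ((a : ZMod p) * (n : ZMod p) + (b : ZMod p) * (n : ZMod p)⁻¹) := by
    rw [ep, ← ZMod.stdAddChar_coe]
    push_cast
    rw [ZMod.natCast_zmod_val]
  rw [Kl, kloostermanSum]
  simp_rw [hterm]
  exact (ZMod.sum_Icc_one_pred_eq_sum_erase_zero p fun x => ZMod.stdAddChar (_ * x + _ * x⁻¹)).trans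
    (sum_units_eq_sum_erase_zero _).symm

theorem stmt15 (p : ℕ) (hp : p.Prime) (hp2 : p ≠ 2) (a b : ℤ)
    (ha : ¬ (p : ℤ) ∣ a) (hb : ¬ (p : ℤ) ∣ b) :
    ‖Kl p a b‖ ^ 2 ≤ (p : ℝ) + (p : ℝ) ^ ((3 : ℝ) / 2) := by
  have := Fact.mk hp
  have hchar : ringChar (ZMod p) ≠ 2 := by rwa [ZMod.ringChar_zmod_n]
  have ha' : (a : ZMod p) ≠ 0 := by rwa [Ne, ZMod.intCast_zmod_eq_zero_iff_dvd]
  have hb' : (b : ZMod p) ≠ 0 := by rwa [Ne, ZMod.intCast_zmod_eq_zero_iff_dvd]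
  rw [Kl_eq_kloostermanSum]
  simpa [ZMod.card] using
    norm_sq_kloostermanSum_le (ZMod.isPrimitive_stdAddChar p) hchar ha' hb'
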